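/- arXiv:2205.12170 — 6 statements merged into one kernel-verified Lean document; each statement's English description precedes it below -/
import Mathlib

section
/- Each of the three smooth vector fields v₁(x,y,w) = (1,0,0), v₂(x,y,w) = (0,1,0), and v₃(x,y,w) = (y, −x, −1) on ℝ³ is an infinitesimal symmetry of the elliptic system Σ_E; hence so is every real linear combination a·v₃ + b·v₁ + c·v₂ with a,b,c ∈ ℝ. -/
open Real Set

/-- The state space ℝ³ with coordinates (x, y, w). -/
abbrev V3 : Type := Fin 3 → ℝ

/-- Lie bracket of vector fields: [v,u](ξ) = Du(ξ)·v(ξ) − Dv(ξ)·u(ξ). -/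
noncomputable def lieBr (v u : V3 → V3) : V3 → V3 :=
  fun ξ => fderiv ℝ u ξ (v ξ) - fderiv ℝ v ξ (u ξ)

/-- `v` is an infinitesimal symmetry of the control-affine system `(f, g)` on `U`. -/
def InfSymmOn (U : Set V3) (f g v : V3 → V3) : Prop :=
  ∀ ξ ∈ U, (∃ c : ℝ, lieBr v g ξ = c • g ξ) ∧ (∃ c : ℝ, lieBr v f ξ = c • g ξ)

/-- The control vector field g₀ = ∂/∂w. -/
def g0 : V3 → V3 := fun _ => ![0, 0, 1]

/-- Drift of the elliptic system Σ_E. -/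
noncomputable def fE : V3 → V3 := fun ξ => ![Real.cos (ξ 2), Real.sin (ξ 2), 0]

noncomputable def LfE (ξ : V3) : V3 →L[ℝ] V3 :=
  ContinuousLinearMap.pi
    ![(-Real.sin (ξ 2)) • (ContinuousLinearMap.proj 2 : V3 →L[ℝ] ℝ),
      (Real.cos (ξ 2)) • (ContinuousLinearMap.proj 2 : V3 →L[ℝ] ℝ), 0]

lemma hasFDerivAt_fE (ξ : V3) : HasFDerivAt fE (LfE ξ) ξ := by
  rw [hasFDerivAt_pi']
  intro i
  fin_cases i
  · have h := (hasFDerivAt_apply (2 : Fin 3) ξ).cos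
    convert h using 1 <;>
      first
      | (funext η; simp [fE])
      | (ext h; simp [LfE])
  · have h := (hasFDerivAt_apply (2 : Fin 3) ξ).sin
    convert h using 1 <;>
      first
      | (funext η; simp [fE])
      | (ext h; simp [LfE])
  · have h : HasFDerivAt (fun _ : V3 => (0:ℝ)) (0 : V3 →L[ℝ] ℝ) ξ := hasFDerivAt_const 0 ξ
    convert h using 1 <;>
      first
      | (funext η; simp [fE])
      | (ext h; simp [LfE])

noncomputable def Lv (a : ℝ) : V3 →L[ℝ] V3 :=
  ContinuousLinearMap.pi
    ![a • (ContinuousLinearMap.proj 1 : V3 →L[ℝ] ℝ),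
      (-a) • (ContinuousLinearMap.proj 0 : V3 →L[ℝ] ℝ), 0]

lemma hasFDerivAt_v (a b c : ℝ) (ξ : V3) :
    HasFDerivAt (fun ξ : V3 => ![a * ξ 1 + b, -(a * ξ 0) + c, -a]) (Lv a) ξ := by
  rw [hasFDerivAt_pi']
  intro i
  fin_cases i
  · have h0 : HasFDerivAt (fun f : V3 => f 1) ((ContinuousLinearMap.proj 1 : V3 →L[ℝ] ℝ)) ξ :=
      hasFDerivAt_apply 1 ξ
    have h := (h0.const_smul a).add_const b
    convert h using 1 <;>
      first
      | (funext η; simp [smul_eq_mul])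
      | (ext h; simp [Lv])
  · have h0 : HasFDerivAt (fun f : V3 => f 0) ((ContinuousLinearMap.proj 0 : V3 →L[ℝ] ℝ)) ξ :=
      hasFDerivAt_apply 0 ξ
    have h := ((h0.const_smul a).neg).add_const c
    convert h using 1 <;>
      first
      | (funext η; simp [smul_eq_mul])
      | (ext h; simp [Lv])
  · have h : HasFDerivAt (fun _ : V3 => -a) (0 : V3 →L[ℝ] ℝ) ξ := hasFDerivAt_const _ ξ
    convert h using 1 <;>
      first
      | (funext η; simp)
      | (ext h; simp [Lv])

lemma main_lemma (a b c : ℝ) :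
    InfSymmOn univ fE g0 (fun ξ : V3 => ![a * ξ 1 + b, -(a * ξ 0) + c, -a]) := by
  intro ξ _
  constructor
  · refine ⟨0, ?_⟩
    have hg : fderiv ℝ g0 ξ = 0 := fderiv_const_apply _
    have hv : fderiv ℝ (fun ξ : V3 => ![a * ξ 1 + b, -(a * ξ 0) + c, -a]) ξ = Lv a :=
      (hasFDerivAt_v a b c ξ).fderiv
    simp only [lieBr, hg, hv]
    funext i
    fin_cases i <;> simp [Lv, g0]
  · refine ⟨0, ?_⟩
    have hf : fderiv ℝ fE ξ = LfE ξ := (hasFDerivAt_fE ξ).fderiv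
    have hv : fderiv ℝ (fun ξ : V3 => ![a * ξ 1 + b, -(a * ξ 0) + c, -a]) ξ = Lv a :=
      (hasFDerivAt_v a b c ξ).fderiv
    simp only [lieBr, hf, hv]
    funext i
    fin_cases i <;> simp [Lv, LfE, g0, fE] <;> ring

/-- v₁ = (1,0,0), v₂ = (0,1,0), v₃ = (y,−x,−1) are infinitesimal
symmetries of Σ_E, and hence so is every real linear combination a·v₃ + b·v₁ + c·v₂. -/
theorem symmetries_of_elliptic :
    InfSymmOn univ fE g0 (fun _ => ![1, 0, 0]) ∧
    InfSymmOn univ fE g0 (fun _ => ![0, 1, 0]) ∧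
    InfSymmOn univ fE g0 (fun ξ => ![ξ 1, -ξ 0, -1]) ∧
    ∀ a b c : ℝ,
      InfSymmOn univ fE g0
        (fun ξ => a • ![ξ 1, -ξ 0, -1] + b • ![(1:ℝ), 0, 0] + c • ![(0:ℝ), 1, 0]) := by
  refine ⟨?_, ?_, ?_, ?_⟩
  · have h := main_lemma 0 1 0
    convert h using 2 with ξ
    funext i; fin_cases i <;> simp
  · have h := main_lemma 0 0 1
    convert h using 2 with ξ
    funext i; fin_cases i <;> simp
  · have h := main_lemma 1 0 0
    convert h using 2 with ξ
    funext i; fin_cases i <;> simp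
  · intro a b c
    have h := main_lemma a b c
    convert h using 2 with ξ
    funext i; fin_cases i <;> simp [Matrix.smul_cons] <;> ring
end

section
/- Every smooth vector field v on ℝ³ that is an infinitesimal symmetry of the elliptic system Σ_E has the form v(x,y,w) = (a·y + b, −a·x + c, −a) for some real constants a, b, c; equivalently, the Lie algebra of infinitesimal symmetries of Σ_E is exactly the real linear span of the vector fields (1,0,0), (0,1,0), and (y, −x, −1). -/
open Real Set

namespace SymmHelp

def e (i : Fin 3) : V3 := Pi.single i 1

noncomputable def LE (ξ : V3) : V3 →L[ℝ] V3 :=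
  ContinuousLinearMap.pi ![(-Real.sin (ξ 2)) • ContinuousLinearMap.proj 2,
    (Real.cos (ξ 2)) • ContinuousLinearMap.proj 2, 0]

lemma hasFDerivAt_fE (ξ : V3) : HasFDerivAt fE (LE ξ) ξ := by
  apply hasFDerivAt_pi''
  intro i
  fin_cases i <;>
    simp only [fE, LE, Matrix.cons_val_zero, Matrix.cons_val_one, Matrix.head_cons,
      Matrix.cons_val_two, Matrix.tail_cons, ContinuousLinearMap.proj_pi, Fin.isValue]
  · exact (Real.hasDerivAt_cos (ξ 2)).comp_hasFDerivAt ξ (hasFDerivAt_apply (𝕜 := ℝ) 2 ξ)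
  · exact (Real.hasDerivAt_sin (ξ 2)).comp_hasFDerivAt ξ (hasFDerivAt_apply (𝕜 := ℝ) 2 ξ)
  · exact hasFDerivAt_const 0 ξ

lemma fderiv_fE (ξ : V3) : fderiv ℝ fE ξ = LE ξ := (hasFDerivAt_fE ξ).fderiv

lemma fderiv_g0 (ξ : V3) : fderiv ℝ g0 ξ = 0 := fderiv_const_apply _

end SymmHelp

namespace SymmHelp

lemma update_line (ξ : V3) (i : Fin 3) (t : ℝ) :
    Function.update ξ i t = Function.update ξ i 0 + t • e i := by
  funext k
  by_cases h : k = i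
  · subst h; simp [e]
  · simp [Function.update_apply, h, e, Pi.single_apply, Ne.symm h]

lemma hasDerivAt_line (v : V3 → V3) (hv : Differentiable ℝ v) (ξ : V3) (i j : Fin 3) (t : ℝ) :
    HasDerivAt (fun s => v (Function.update ξ i s) j)
      (fderiv ℝ v (Function.update ξ i t) (e i) j) t := by
  have h1 : HasDerivAt (fun s : ℝ => Function.update ξ i 0 + s • e i) (e i) t := by
    simpa using ((hasDerivAt_id t).smul_const (e i)).const_add (Function.update ξ i 0)
  have hup : Function.update ξ i 0 + t • e i = Function.update ξ i t := (update_line ξ i t).symm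
  have h2 := (hup ▸ (hv (Function.update ξ i t)).hasFDerivAt).comp_hasDerivAt t h1
  have h3 := (hasFDerivAt_apply (𝕜 := ℝ) j (v (Function.update ξ i 0 + t • e i))).comp_hasDerivAt t h2
  have heq : (fun s => v (Function.update ξ i 0 + s • e i) j) = fun s => v (Function.update ξ i s) j := by
    funext s; rw [← update_line]
  have h3' : HasDerivAt (fun s => v (Function.update ξ i 0 + s • e i) j)
      ((fderiv ℝ v (Function.update ξ i 0 + t • e i)) (e i) j) t := h3
  rw [hup] at h3'
  rwa [heq] at h3'

/-- If the directional derivative of component `j` in direction `i` vanishes everywhere,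
the component is independent of coordinate `i`. -/
lemma const_of_dir (v : V3 → V3) (hv : Differentiable ℝ v) (i j : Fin 3)
    (h : ∀ ξ, fderiv ℝ v ξ (e i) j = 0) (ξ : V3) (t : ℝ) :
    v (Function.update ξ i t) j = v ξ j := by
  have hd : Differentiable ℝ (fun s => v (Function.update ξ i s) j) :=
    fun s => (hasDerivAt_line v hv ξ i j s).differentiableAt
  have hz : ∀ s, deriv (fun s => v (Function.update ξ i s) j) s = 0 := by
    intro s; rw [(hasDerivAt_line v hv ξ i j s).deriv]; exact h _
  have := is_const_of_deriv_eq_zero hd hz t (ξ i)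
  simpa [Function.update_eq_self] using this

end SymmHelp

namespace SymmHelp

lemma fderiv_invariant (v : V3 → V3) (hv : Differentiable ℝ v) (i j k : Fin 3) (hik : i ≠ k)
    (hconst : ∀ ζ (w : ℝ), v (Function.update ζ k w) j = v ζ j) (ξ : V3) (w : ℝ) :
    fderiv ℝ v (Function.update ξ k w) (e i) j = fderiv ℝ v ξ (e i) j := by
  have h1 := hasDerivAt_line v hv ξ i j (ξ i)
  rw [Function.update_eq_self] at h1
  have h2 := hasDerivAt_line v hv (Function.update ξ k w) i j ((Function.update ξ k w) i)
  rw [Function.update_eq_self, Function.update_of_ne hik] at h2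
  have heq : (fun s => v (Function.update (Function.update ξ k w) i s) j)
      = fun s => v (Function.update ξ i s) j := by
    funext s
    rw [Function.update_comm (Ne.symm hik), hconst]
  rw [heq] at h2
  exact h2.unique h1

lemma affine_line (v : V3 → V3) (hv : Differentiable ℝ v) (ξ : V3) (i j : Fin 3) (a : ℝ)
    (h : ∀ ζ, fderiv ℝ v ζ (e i) j = a) (t : ℝ) :
    v (Function.update ξ i t) j = v ξ j + a * (t - ξ i) := by
  have hd : ∀ s : ℝ, HasDerivAt (fun s => v (Function.update ξ i s) j - a * s) 0 s := by
    intro s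
    have := (hasDerivAt_line v hv ξ i j s).sub ((hasDerivAt_id s).const_mul a)
    have h2 : HasDerivAt ((fun s => v (Function.update ξ i s) j) - fun y => a * y) 0 s := by
      simpa [h] using this
    exact h2
  have hc := is_const_of_deriv_eq_zero (fun s => (hd s).differentiableAt)
    (fun s => (hd s).deriv) t (ξ i)
  rw [Function.update_eq_self] at hc
  linarith [hc]

end SymmHelp

namespace SymmHelp

lemma vec001 : (![0, 0, 1] : V3) = e 2 := by
  funext k; fin_cases k <;> simp [e, Pi.single]

lemma g0_eq (ξ : V3) : g0 ξ = e 2 := by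
  funext k; fin_cases k <;> simp [g0, e, Pi.single]

lemma fE_decomp (ξ : V3) : fE ξ = Real.cos (ξ 2) • e 0 + Real.sin (ξ 2) • e 1 := by
  funext k; fin_cases k <;> simp [fE, e, Pi.single]

lemma extract (v : V3 → V3) (hv : Differentiable ℝ v) (hs : InfSymmOn univ fE g0 v) :
    (∀ ξ, fderiv ℝ v ξ (e 2) 0 = 0) ∧ (∀ ξ, fderiv ℝ v ξ (e 2) 1 = 0) ∧
    (∀ ξ, Real.sin (ξ 2) * v ξ 2
        = -(Real.cos (ξ 2) * fderiv ℝ v ξ (e 0) 0) - Real.sin (ξ 2) * fderiv ℝ v ξ (e 1) 0) ∧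
    (∀ ξ, Real.cos (ξ 2) * v ξ 2
        = Real.cos (ξ 2) * fderiv ℝ v ξ (e 0) 1 + Real.sin (ξ 2) * fderiv ℝ v ξ (e 1) 1) := by
  have key : ∀ ξ, (fderiv ℝ v ξ (e 2) 0 = 0 ∧ fderiv ℝ v ξ (e 2) 1 = 0) ∧
      (Real.sin (ξ 2) * v ξ 2
        = -(Real.cos (ξ 2) * fderiv ℝ v ξ (e 0) 0) - Real.sin (ξ 2) * fderiv ℝ v ξ (e 1) 0 ∧
      Real.cos (ξ 2) * v ξ 2
        = Real.cos (ξ 2) * fderiv ℝ v ξ (e 0) 1 + Real.sin (ξ 2) * fderiv ℝ v ξ (e 1) 1) := by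
    intro ξ
    obtain ⟨⟨c1, h1⟩, ⟨c2, h2⟩⟩ := hs ξ (mem_univ ξ)
    constructor
    · constructor
      · simpa [lieBr, fderiv_g0, g0, vec001, e, Pi.single_apply, Pi.sub_apply]
          using congrFun h1 0
      · simpa [lieBr, fderiv_g0, g0, vec001, e, Pi.single_apply, Pi.sub_apply]
          using congrFun h1 1
    · have e0 := congrFun h2 0
      have e1 := congrFun h2 1
      rw [show lieBr v fE ξ = fderiv ℝ fE ξ (v ξ) - fderiv ℝ v ξ (fE ξ) from rfl,
        fderiv_fE, fE_decomp, map_add, map_smul, map_smul] at e0 e1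
      simp [LE, ContinuousLinearMap.pi_apply, g0, Pi.sub_apply, Pi.add_apply,
        Pi.smul_apply, smul_eq_mul] at e0 e1
      constructor
      · linarith
      · linarith
  exact ⟨fun ξ => ((key ξ).1).1, fun ξ => ((key ξ).1).2, fun ξ => ((key ξ).2).1,
    fun ξ => ((key ξ).2).2⟩

end SymmHelp

namespace SymmHelp

lemma hard (v : V3 → V3) (hv : ContDiff ℝ (⊤ : ℕ∞) v) (hs : InfSymmOn univ fE g0 v) :
    ∃ a b c : ℝ, v = fun ξ => ![a * ξ 1 + b, -a * ξ 0 + c, -a] := by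
  have hd : Differentiable ℝ v := hv.differentiable (by simp)
  obtain ⟨h20, h21, hB, hC⟩ := extract v hd hs
  have hc0 : ∀ ζ w, v (Function.update ζ 2 w) 0 = v ζ 0 := const_of_dir v hd 2 0 h20
  have hc1 : ∀ ζ w, v (Function.update ζ 2 w) 1 = v ζ 1 := const_of_dir v hd 2 1 h21
  have hi00 : ∀ ξ w, fderiv ℝ v (Function.update ξ 2 w) (e 0) 0 = fderiv ℝ v ξ (e 0) 0 :=
    fderiv_invariant v hd 0 0 2 (by decide) hc0
  have hi10 : ∀ ξ w, fderiv ℝ v (Function.update ξ 2 w) (e 1) 0 = fderiv ℝ v ξ (e 1) 0 :=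
    fderiv_invariant v hd 1 0 2 (by decide) hc0
  have hi01 : ∀ ξ w, fderiv ℝ v (Function.update ξ 2 w) (e 0) 1 = fderiv ℝ v ξ (e 0) 1 :=
    fderiv_invariant v hd 0 1 2 (by decide) hc1
  have hi11 : ∀ ξ w, fderiv ℝ v (Function.update ξ 2 w) (e 1) 1 = fderiv ℝ v ξ (e 1) 1 :=
    fderiv_invariant v hd 1 1 2 (by decide) hc1
  have hquad : ∀ ξ (w : ℝ), Real.cos w ^ 2 * fderiv ℝ v ξ (e 0) 0
      + Real.sin w * Real.cos w * (fderiv ℝ v ξ (e 1) 0 + fderiv ℝ v ξ (e 0) 1)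
      + Real.sin w ^ 2 * fderiv ℝ v ξ (e 1) 1 = 0 := by
    intro ξ w
    have hb := hB (Function.update ξ 2 w)
    have hc := hC (Function.update ξ 2 w)
    rw [Function.update_self, hi00, hi10] at hb
    rw [Function.update_self, hi01, hi11] at hc
    linear_combination Real.cos w * hb - Real.sin w * hc
  have hP00 : ∀ ξ, fderiv ℝ v ξ (e 0) 0 = 0 := fun ξ => by simpa using hquad ξ 0
  have hP11 : ∀ ξ, fderiv ℝ v ξ (e 1) 1 = 0 := fun ξ => by
    simpa [Real.sin_pi_div_two, Real.cos_pi_div_two] using hquad ξ (Real.pi / 2)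
  have hskew : ∀ ξ, fderiv ℝ v ξ (e 1) 0 = -fderiv ℝ v ξ (e 0) 1 := by
    intro ξ
    have h := hquad ξ (Real.pi / 4)
    rw [Real.sin_pi_div_four, Real.cos_pi_div_four, hP00, hP11] at h
    have h2 : Real.sqrt 2 * Real.sqrt 2 = 2 := Real.mul_self_sqrt (by norm_num)
    nlinarith [h, h2]
  have hv2 : ∀ ξ, v ξ 2 = fderiv ℝ v ξ (e 0) 1 := by
    intro ξ
    rcases eq_or_ne (Real.cos (ξ 2)) 0 with hcos | hcos
    · have hsin : Real.sin (ξ 2) ≠ 0 := by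
        intro hs0
        have := Real.sin_sq_add_cos_sq (ξ 2)
        rw [hs0, hcos] at this; norm_num at this
      have hb := hB ξ
      rw [hP00, hskew] at hb
      have : Real.sin (ξ 2) * v ξ 2 = Real.sin (ξ 2) * fderiv ℝ v ξ (e 0) 1 := by linarith
      exact mul_left_cancel₀ hsin this
    · have hc := hC ξ
      rw [hP11] at hc
      have : Real.cos (ξ 2) * v ξ 2 = Real.cos (ξ 2) * fderiv ℝ v ξ (e 0) 1 := by linarith
      exact mul_left_cancel₀ hcos this
  have hc1' : ∀ ζ w, v (Function.update ζ 1 w) 1 = v ζ 1 := const_of_dir v hd 1 1 hP11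
  have hc0' : ∀ ζ w, v (Function.update ζ 0 w) 0 = v ζ 0 := const_of_dir v hd 0 0 hP00
  have hiA : ∀ ξ w, fderiv ℝ v (Function.update ξ 1 w) (e 0) 1 = fderiv ℝ v ξ (e 0) 1 :=
    fderiv_invariant v hd 0 1 1 (by decide) hc1'
  have hiC : ∀ ξ w, fderiv ℝ v (Function.update ξ 0 w) (e 1) 0 = fderiv ℝ v ξ (e 1) 0 :=
    fderiv_invariant v hd 1 0 0 (by decide) hc0'
  have hconstP : ∀ ξ ζ : V3, fderiv ℝ v ξ (e 0) 1 = fderiv ℝ v ζ (e 0) 1 := by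
    intro ξ ζ
    have step1 : fderiv ℝ v ξ (e 0) 1 = fderiv ℝ v (Function.update ξ 0 (ζ 0)) (e 0) 1 := by
      have h1 := hskew ξ
      have h2 := hskew (Function.update ξ 0 (ζ 0))
      have h3 := hiC ξ (ζ 0)
      linarith
    have hpt : Function.update (Function.update (Function.update ξ 0 (ζ 0)) 1 (ζ 1)) 2 (ζ 2)
        = ζ := by
      funext k; fin_cases k <;> simp [Function.update]
    rw [step1, ← hiA (Function.update ξ 0 (ζ 0)) (ζ 1),
      ← hi01 (Function.update (Function.update ξ 0 (ζ 0)) 1 (ζ 1)) (ζ 2), hpt]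
  set a : ℝ := -fderiv ℝ v 0 (e 0) 1 with ha
  have hP01 : ∀ ξ, fderiv ℝ v ξ (e 0) 1 = -a := by
    intro ξ; rw [hconstP ξ 0, ha]; ring
  have hP10 : ∀ ξ, fderiv ℝ v ξ (e 1) 0 = a := by
    intro ξ; rw [hskew, hP01]; ring
  refine ⟨a, v 0 0, v 0 1, ?_⟩
  funext ξ
  have h0 : v ξ 0 = a * ξ 1 + v 0 0 := by
    have hpt : Function.update (Function.update ξ 0 0) 2 0
        = Function.update (0 : V3) 1 (ξ 1) := by
      funext k; fin_cases k <;> simp [Function.update]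
    have hA := affine_line v hd (0 : V3) 1 0 a hP10 (ξ 1)
    have hB' : v ξ 0 = v (Function.update (0 : V3) 1 (ξ 1)) 0 := by
      rw [← hpt, hc0, hc0']
    rw [hB', hA]; simp; ring
  have h1 : v ξ 1 = -a * ξ 0 + v 0 1 := by
    have hpt : Function.update (Function.update ξ 1 0) 2 0
        = Function.update (0 : V3) 0 (ξ 0) := by
      funext k; fin_cases k <;> simp [Function.update]
    have hA := affine_line v hd (0 : V3) 0 1 (-a) (fun ζ => by rw [hP01]) (ξ 0)
    have hB' : v ξ 1 = v (Function.update (0 : V3) 0 (ξ 0)) 1 := by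
      rw [← hpt, hc1, hc1']
    rw [hB', hA]; simp; ring
  have h2 : v ξ 2 = -a := by rw [hv2, hP01]
  funext k; fin_cases k <;> simp [h0, h1, h2]

end SymmHelp

namespace SymmHelp

noncomputable def LV (a : ℝ) : V3 →L[ℝ] V3 :=
  ContinuousLinearMap.pi ![a • ContinuousLinearMap.proj 1, (-a) • ContinuousLinearMap.proj 0, 0]

lemma hasFDerivAt_v (a b c : ℝ) (ξ : V3) :
    HasFDerivAt (fun ξ : V3 => (![a * ξ 1 + b, -a * ξ 0 + c, -a] : V3)) (LV a) ξ := by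
  apply hasFDerivAt_pi''
  intro i
  fin_cases i <;>
    simp only [LV, Matrix.cons_val_zero, Matrix.cons_val_one, Matrix.head_cons,
      Matrix.cons_val_two, Matrix.tail_cons, ContinuousLinearMap.proj_pi, Fin.isValue]
  · exact ((hasFDerivAt_apply 1 ξ).const_mul a).add_const b
  · exact ((hasFDerivAt_apply 0 ξ).const_mul (-a)).add_const c
  · exact hasFDerivAt_const _ ξ

lemma easy (a b c : ℝ) :
    ContDiff ℝ (⊤ : ℕ∞) (fun ξ : V3 => (![a * ξ 1 + b, -a * ξ 0 + c, -a] : V3)) ∧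
    InfSymmOn univ fE g0 (fun ξ : V3 => (![a * ξ 1 + b, -a * ξ 0 + c, -a] : V3)) := by
  constructor
  · have heq : (fun ξ : V3 => (![a * ξ 1 + b, -a * ξ 0 + c, -a] : V3))
        = fun ξ : V3 => LV a ξ + ![b, c, -a] := by
      funext ξ k
      fin_cases k <;> simp [LV, ContinuousLinearMap.pi_apply]
    rw [heq]
    exact (LV a).contDiff.add contDiff_const
  · intro ξ _
    have hfd := (hasFDerivAt_v a b c ξ).fderiv
    constructor
    · refine ⟨0, ?_⟩
      funext k
      rw [show lieBr (fun ξ : V3 => (![a * ξ 1 + b, -a * ξ 0 + c, -a] : V3)) g0 ξ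
          = fderiv ℝ g0 ξ (![a * ξ 1 + b, -a * ξ 0 + c, -a])
            - fderiv ℝ (fun ξ : V3 => (![a * ξ 1 + b, -a * ξ 0 + c, -a] : V3)) ξ (g0 ξ)
          from rfl, fderiv_g0, hfd]
      fin_cases k <;>
        simp [LV, g0, ContinuousLinearMap.pi_apply]
    · refine ⟨0, ?_⟩
      funext k
      rw [show lieBr (fun ξ : V3 => (![a * ξ 1 + b, -a * ξ 0 + c, -a] : V3)) fE ξ
          = fderiv ℝ fE ξ (![a * ξ 1 + b, -a * ξ 0 + c, -a])
            - fderiv ℝ (fun ξ : V3 => (![a * ξ 1 + b, -a * ξ 0 + c, -a] : V3)) ξ (fE ξ)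
          from rfl, fderiv_fE, hfd]
      fin_cases k <;>
        simp [LV, LE, fE, g0, ContinuousLinearMap.pi_apply] <;> ring

end SymmHelp

/-- the Lie algebra of infinitesimal symmetries of Σ_E is exactly the real
linear span of (1,0,0), (0,1,0), (y,−x,−1): every smooth infinitesimal symmetry has the
form v(x,y,w) = (a·y + b, −a·x + c, −a), and conversely. -/
theorem symmetry_algebra_of_elliptic :
    {v : V3 → V3 | ContDiff ℝ (⊤ : ℕ∞) v ∧ InfSymmOn univ fE g0 v} =
      {v : V3 → V3 | ∃ a b c : ℝ, v = fun ξ => ![a * ξ 1 + b, -a * ξ 0 + c, -a]} := by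
  ext v
  simp only [mem_setOf_eq]
  constructor
  · rintro ⟨hv, hs⟩
    exact SymmHelp.hard v hv hs
  · rintro ⟨a, b, c, rfl⟩
    exact SymmHelp.easy a b c
end

section
/- Let L be a 3-dimensional real Lie algebra, let I ⊆ L be a 2-dimensional abelian Lie ideal, and let ℓ ∈ L with ℓ ∉ I. If the restriction of ad_ℓ to I is diagonalisable with two real eigenvalues λ₁, λ₂ satisfying λ₁ = 2λ₂ and λ₂ ≠ 0, then L admits a basis (e₁, e₂, e₃) with bracket relations [e₁,e₂] = 0, [e₁,e₃] = 2e₁, and [e₂,e₃] = e₂ (i.e., L is isomorphic to the symmetry algebra 𝔏_P of the parabolic system). -/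
/-- a 3-dimensional real Lie algebra with a 2-dimensional abelian ideal `I`
on which `ad_ℓ` (for some ℓ ∉ I) is diagonalisable with real eigenvalues λ₁ = 2λ₂, λ₂ ≠ 0,
is isomorphic to 𝔏_P: it admits a basis (e₁,e₂,e₃) with [e₁,e₂] = 0, [e₁,e₃] = 2e₁,
[e₂,e₃] = e₂. -/
theorem bianchi_parabolic (L : Type*) [LieRing L] [LieAlgebra ℝ L]
    (hdim : Module.finrank ℝ L = 3)
    (I : LieIdeal ℝ L) (hIdim : Module.finrank ℝ I = 2)
    (habel : ∀ u v : L, u ∈ I → v ∈ I → ⁅u, v⁆ = 0)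
    (ℓ : L) (hℓ : ℓ ∉ I)
    (u₁ u₂ : L) (hu₁ : u₁ ∈ I) (hu₂ : u₂ ∈ I)
    (hind : LinearIndependent ℝ ![u₁, u₂])
    (lam₁ lam₂ : ℝ) (h₁ : ⁅ℓ, u₁⁆ = lam₁ • u₁) (h₂ : ⁅ℓ, u₂⁆ = lam₂ • u₂)
    (hrel : lam₁ = 2 * lam₂) (hne : lam₂ ≠ 0) :
    ∃ e : Module.Basis (Fin 3) ℝ L,
      ⁅e 0, e 1⁆ = 0 ∧ ⁅e 0, e 2⁆ = (2 : ℝ) • e 0 ∧ ⁅e 1, e 2⁆ = e 1 := by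
  set v : Fin 3 → L := ![u₁, u₂, (-lam₂⁻¹) • ℓ] with hv
  have hv0 : v 0 = u₁ := rfl
  have hv1 : v 1 = u₂ := rfl
  have hv2 : v 2 = (-lam₂⁻¹) • ℓ := rfl
  have hli : LinearIndependent ℝ v := by
    rw [Fintype.linearIndependent_iff]
    intro g hg
    rw [Fin.sum_univ_three, hv0, hv1, hv2] at hg
    have h2 : g 2 = 0 := by
      by_contra h
      apply hℓ
      have key : (g 2 * (-lam₂⁻¹)) • ℓ = -(g 0 • u₁ + g 1 • u₂) := by
        rw [mul_smul]
        rw [eq_neg_iff_add_eq_zero, add_comm]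
        exact hg
      have hmem : (g 2 * (-lam₂⁻¹)) • ℓ ∈ I := by
        rw [key]; exact neg_mem (add_mem (I.smul_mem _ hu₁) (I.smul_mem _ hu₂))
      have hc : g 2 * (-lam₂⁻¹) ≠ 0 := by
        simp [h, hne]
      have := I.smul_mem (g 2 * (-lam₂⁻¹))⁻¹ hmem
      rwa [smul_smul, inv_mul_cancel₀ hc, one_smul] at this
    rw [h2, zero_smul, add_zero] at hg
    have h01 : ∀ i : Fin 2, (![g 0, g 1]) i = 0 := by
      have := Fintype.linearIndependent_iff.mp hind ![g 0, g 1]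
      apply this
      rw [Fin.sum_univ_two]
      simpa using hg
    intro i
    fin_cases i
    · simpa using h01 0
    · simpa using h01 1
    · exact h2
  have hcard : Fintype.card (Fin 3) = Module.finrank ℝ L := by simp [hdim]
  let e := basisOfLinearIndependentOfCardEqFinrank hli hcard
  have he : ∀ i, e i = v i := fun i => by
    simp [e, coe_basisOfLinearIndependentOfCardEqFinrank]
  refine ⟨e, ?_, ?_, ?_⟩
  · rw [he 0, he 1, hv0, hv1]
    exact habel _ _ hu₁ hu₂
  · rw [he 0, he 2, hv0, hv2, lie_smul, ← lie_skew, h₁, hrel]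
    rw [smul_neg, smul_smul, ← neg_smul]
    congr 1
    field_simp
  · rw [he 1, he 2, hv1, hv2, lie_smul, ← lie_skew, h₂]
    rw [smul_neg, smul_smul, ← neg_smul, neg_mul, neg_neg, inv_mul_cancel₀ hne, one_smul]
end

section
/- Let L be a 3-dimensional real Lie algebra, let I ⊆ L be a 2-dimensional abelian Lie ideal, and let ℓ ∈ L with ℓ ∉ I. If the restriction of ad_ℓ to I is diagonalisable with two real eigenvalues λ₁, λ₂ satisfying λ₁ = −λ₂ and λ₂ ≠ 0, then L admits a basis (e₁, e₂, e₃) with bracket relations [e₁,e₂] = 0, [e₁,e₃] = e₂, and [e₂,e₃] = e₁ (i.e., L is isomorphic to the symmetry algebra 𝔏_H of the hyperbolic system, the Lie algebra of the Poincaré group P(1,1)). -/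
/-- a 3-dimensional real Lie algebra with a 2-dimensional abelian ideal `I`
on which `ad_ℓ` (for some ℓ ∉ I) is diagonalisable with real eigenvalues λ₁ = −λ₂, λ₂ ≠ 0,
is isomorphic to 𝔏_H, the Lie algebra of the Poincaré group P(1,1): it admits a basis
(e₁,e₂,e₃) with [e₁,e₂] = 0, [e₁,e₃] = e₂, [e₂,e₃] = e₁. -/
theorem bianchi_hyperbolic (L : Type*) [LieRing L] [LieAlgebra ℝ L]
    (hdim : Module.finrank ℝ L = 3)
    (I : LieIdeal ℝ L) (hIdim : Module.finrank ℝ I = 2)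
    (habel : ∀ u v : L, u ∈ I → v ∈ I → ⁅u, v⁆ = 0)
    (ℓ : L) (hℓ : ℓ ∉ I)
    (u₁ u₂ : L) (hu₁ : u₁ ∈ I) (hu₂ : u₂ ∈ I)
    (hind : LinearIndependent ℝ ![u₁, u₂])
    (lam₁ lam₂ : ℝ) (h₁ : ⁅ℓ, u₁⁆ = lam₁ • u₁) (h₂ : ⁅ℓ, u₂⁆ = lam₂ • u₂)
    (hrel : lam₁ = -lam₂) (hne : lam₂ ≠ 0) :
    ∃ e : Module.Basis (Fin 3) ℝ L,
      ⁅e 0, e 1⁆ = 0 ∧ ⁅e 0, e 2⁆ = e 1 ∧ ⁅e 1, e 2⁆ = e 0 := by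
  have hFD : FiniteDimensional ℝ L := Module.finite_of_finrank_pos (by omega)
  set v : Fin 3 → L := ![u₁ + u₂, u₁ - u₂, lam₂⁻¹ • ℓ] with hv
  have hli : LinearIndependent ℝ v := by
    rw [Fintype.linearIndependent_iff]
    intro g hg
    simp only [hv, Fin.sum_univ_three, Matrix.cons_val_zero, Matrix.cons_val_one,
      Matrix.head_cons, Matrix.cons_val_two, Matrix.tail_cons] at hg
    have hg2 : g 2 = 0 := by
      by_contra hg2
      apply hℓ
      have key1 : (g 2 • lam₂⁻¹ • ℓ : L) = -(g 0 • (u₁ + u₂) + g 1 • (u₁ - u₂)) := by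
        linear_combination (norm := module) hg
      have key2 : ℓ = (lam₂ * (g 2)⁻¹) • (g 2 • lam₂⁻¹ • ℓ) := by
        rw [smul_smul, smul_smul]
        have : lam₂ * (g 2)⁻¹ * g 2 * lam₂⁻¹ = 1 := by field_simp
        rw [this, one_smul]
      rw [key1] at key2
      rw [key2]
      exact I.smul_mem _ (neg_mem (add_mem (I.smul_mem _ (add_mem hu₁ hu₂))
        (I.smul_mem _ (sub_mem hu₁ hu₂))))
    rw [hg2, zero_smul, add_zero] at hg
    have hg' : ((g 0 + g 1) • u₁ + (g 0 - g 1) • u₂ : L) = 0 := by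
      linear_combination (norm := module) hg
    have h01 := Fintype.linearIndependent_iff.mp hind ![g 0 + g 1, g 0 - g 1]
      (by simpa [Fin.sum_univ_two] using hg')
    have e0 := h01 0
    have e1 := h01 1
    simp only [Matrix.cons_val_zero, Matrix.cons_val_one, Matrix.head_cons] at e0 e1
    intro i
    fin_cases i
    · show g 0 = 0; linarith
    · show g 1 = 0; linarith
    · exact hg2
  have hcard : Fintype.card (Fin 3) = Module.finrank ℝ L := by simp [hdim]
  have b1 : ⁅u₁, ℓ⁆ = lam₂ • u₁ := by
    rw [← lie_skew, h₁, hrel]; module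
  have b2 : ⁅u₂, ℓ⁆ = -(lam₂ • u₂) := by
    rw [← lie_skew, h₂]
  refine ⟨basisOfLinearIndependentOfCardEqFinrank hli hcard, ?_, ?_, ?_⟩ <;>
    rw [coe_basisOfLinearIndependentOfCardEqFinrank] <;>
    simp only [hv, Matrix.cons_val_zero, Matrix.cons_val_one, Matrix.head_cons,
      Matrix.cons_val_two, Matrix.tail_cons]
  · exact habel _ _ (add_mem hu₁ hu₂) (sub_mem hu₁ hu₂)
  · rw [lie_smul, add_lie, b1, b2, smul_add, smul_neg, smul_smul, smul_smul,
      inv_mul_cancel₀ hne, one_smul, one_smul, ← sub_eq_add_neg]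
  · rw [lie_smul, sub_lie, b1, b2, smul_sub, smul_neg, smul_smul, smul_smul,
      inv_mul_cancel₀ hne, one_smul, one_smul, sub_neg_eq_add]
end

section
/- Let I ⊆ ℝ be an open interval and let a, p, q : I → ℝ be smooth functions satisfying a(w)·p'(w) = q(w) and a(w)·q'(w) = −p(w) for all w ∈ I. Then the function p² + q² is constant on I. Moreover, if a(w₀) = 0 for some w₀ ∈ I, then p and q vanish identically on I. -/
open Real Set

/-- if smooth functions a, p, q on an open interval I satisfy the system
(Sys_E): a·p' = q and a·q' = −p on I, then p² + q² is constant on I; moreover, if a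
vanishes at some point of I, then p and q vanish identically on I. -/
theorem sysE_first_integral
    (I : Set ℝ) (hI : IsOpen I) (hI' : IsPreconnected I)
    (a p q : ℝ → ℝ)
    (ha : ContDiffOn ℝ (⊤ : ℕ∞) a I) (hp : ContDiffOn ℝ (⊤ : ℕ∞) p I) (hq : ContDiffOn ℝ (⊤ : ℕ∞) q I)
    (h₁ : ∀ w ∈ I, a w * deriv p w = q w)
    (h₂ : ∀ w ∈ I, a w * deriv q w = -p w) :
    (∃ C : ℝ, ∀ w ∈ I, p w ^ 2 + q w ^ 2 = C) ∧
    (∀ w₀ ∈ I, a w₀ = 0 → ∀ w ∈ I, p w = 0 ∧ q w = 0) := by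
  have hconv : Convex ℝ I := hI'.ordConnected.convex
  set E : ℝ → ℝ := fun w => p w ^ 2 + q w ^ 2 with hEdef
  have hdp : ∀ w ∈ I, DifferentiableAt ℝ p w := fun w hw =>
    (hp.differentiableOn (by norm_num)).differentiableAt (hI.mem_nhds hw)
  have hdq : ∀ w ∈ I, DifferentiableAt ℝ q w := fun w hw =>
    (hq.differentiableOn (by norm_num)).differentiableAt (hI.mem_nhds hw)
  have hdE : ∀ w ∈ I, HasDerivAt E (2 * p w * deriv p w + 2 * q w * deriv q w) w := by
    intro w hw
    have h1 := ((hdp w hw).hasDerivAt).pow 2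
    have h2 := ((hdq w hw).hasDerivAt).pow 2
    exact (h1.add h2).congr_deriv (by push_cast; ring)
  have hzero : ∀ w ∈ I, a w = 0 → p w = 0 ∧ q w = 0 := by
    intro w hw h
    have e1 := h₁ w hw; have e2 := h₂ w hw
    rw [h, zero_mul] at e1 e2
    exact ⟨by linarith, e1.symm⟩
  have hdE0 : ∀ w ∈ I, deriv E w = 0 := by
    intro w hw
    by_cases h : a w = 0
    · obtain ⟨hp0, hq0⟩ := hzero w hw h
      have hmin : IsLocalMin E w := by
        apply Filter.Eventually.of_forall
        intro x
        show E w ≤ E x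
        simp only [hEdef, hp0, hq0]
        nlinarith [sq_nonneg (p x), sq_nonneg (q x)]
      exact hmin.deriv_eq_zero
    · rw [(hdE w hw).deriv]
      have e1 := h₁ w hw; have e2 := h₂ w hw
      have key : a w * (2 * p w * deriv p w + 2 * q w * deriv q w) = 0 := by
        have hr : a w * (2 * p w * deriv p w + 2 * q w * deriv q w)
            = 2 * p w * (a w * deriv p w) + 2 * q w * (a w * deriv q w) := by ring
        rw [hr, e1, e2]; ring
      exact (mul_eq_zero.mp key).resolve_left h
  have hdiff : DifferentiableOn ℝ E I := fun w hw =>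
    ((hdE w hw).differentiableAt).differentiableWithinAt
  have hconst : ∀ x ∈ I, ∀ y ∈ I, E x = E y := by
    intro x hx y hy
    apply hconv.is_const_of_fderivWithin_eq_zero hdiff _ hx hy
    intro z hz
    have h0 : HasDerivAt E 0 z := by
      have hde := hdE z hz
      rwa [show (2 * p z * deriv p z + 2 * q z * deriv q z) = 0 by
        rw [← hde.deriv]; exact hdE0 z hz] at hde
    rw [fderivWithin_of_isOpen hI hz, h0.hasFDerivAt.fderiv]
    ext
    simp
  constructor
  · rcases I.eq_empty_or_nonempty with h | ⟨w₁, hw₁⟩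
    · exact ⟨0, fun w hw => by simp [h] at hw⟩
    · exact ⟨E w₁, fun w hw => hconst w hw w₁ hw₁⟩
  · intro w₀ hw₀ ha0 w hw
    obtain ⟨hp0, hq0⟩ := hzero w₀ hw₀ ha0
    have h0 : E w = E w₀ := hconst w hw w₀ hw₀
    simp only [hEdef, hp0, hq0] at h0
    constructor <;> nlinarith [sq_nonneg (p w), sq_nonneg (q w)]
end

section
/- Let I ⊆ ℝ be an open interval containing 0, let k ≥ 1 be an integer, and let f : I → ℝ be a smooth (C^∞) function satisfying w·f'(w) = 2k·f(w) for all w ∈ I. Then there exists a constant c ∈ ℝ such that f(w) = c·w^{2k} for all w ∈ I. -/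
open Real Set

private lemma singular_ode_aux
    (I : Set ℝ) (hI : IsOpen I) (hI' : IsPreconnected I) (h0 : (0 : ℝ) ∈ I) :
    ∀ n : ℕ, ∀ f : ℝ → ℝ, ContDiffOn ℝ (⊤ : ℕ∞) f I →
      (∀ w ∈ I, w * deriv f w = (n : ℝ) * f w) →
      ∃ c : ℝ, ∀ w ∈ I, f w = c * w ^ n := by
  have hconv : Convex ℝ I := by
    rw [convex_iff_ordConnected]
    exact hI'.ordConnected
  -- a function with zero derivative on I is constant
  have constI : ∀ g : ℝ → ℝ, (∀ w ∈ I, HasDerivAt g 0 w) → ∀ w ∈ I, g w = g 0 := by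
    intro g hg w hw
    refine hconv.is_const_of_fderivWithin_eq_zero
      (fun x hx => (hg x hx).differentiableAt.differentiableWithinAt) ?_ hw h0
    intro x hx
    rw [fderivWithin_of_isOpen hI hx]
    have := (hg x hx).hasFDerivAt.fderiv
    rw [this]
    ext y
    simp
  intro n
  induction n with
  | zero =>
    intro f hf hode
    have hderiv0 : ∀ w ∈ I, deriv f w = 0 := by
      intro w hw
      rcases eq_or_ne w 0 with rfl | hw0
      · -- continuity of deriv f at 0
        have hcont : ContinuousOn (deriv f) I :=
          hf.continuousOn_deriv_of_isOpen hI (by simp)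
        have h1 : Filter.Tendsto (deriv f) (nhdsWithin 0 (I \ {0})) (nhds (deriv f 0)) :=
          ((hcont.continuousWithinAt h0).mono diff_subset)
        have h2 : Filter.Tendsto (deriv f) (nhdsWithin 0 (I \ {0})) (nhds 0) := by
          apply Filter.Tendsto.congr' _ tendsto_const_nhds
          filter_upwards [self_mem_nhdsWithin] with x hx
          have := hode x hx.1
          norm_num at this
          have hx0 : x ≠ 0 := by simpa using hx.2
          rcases this with h | h
          · exact absurd h hx0
          · exact h.symm
        have hne : (nhdsWithin (0:ℝ) (I \ {0})).NeBot := by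
          have : nhdsWithin (0:ℝ) (I \ {0}) = nhdsWithin 0 ({0}ᶜ) := by
            rw [diff_eq, inter_comm]
            exact nhdsWithin_inter_of_mem' (mem_nhdsWithin_of_mem_nhds (hI.mem_nhds h0))
          rw [this]
          infer_instance
        exact tendsto_nhds_unique h1 h2
      · have := hode w hw
        norm_num at this
        rcases this with h | h
        · exact absurd h hw0
        · exact h
    have hc : ∀ w ∈ I, f w = f 0 := by
      apply constI
      intro w hw
      have hd : DifferentiableAt ℝ f w :=
        (hf.contDiffAt (hI.mem_nhds hw)).differentiableAt (by simp)
      have := hd.hasDerivAt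
      rwa [hderiv0 w hw] at this
    exact ⟨f 0, fun w hw => by simp [hc w hw]⟩
  | succ n ih =>
    intro f hf hode
    have hnpos : ((n : ℝ) + 1) ≠ 0 := by positivity
    have f0 : f 0 = 0 := by
      have := hode 0 h0
      simp only [zero_mul, Nat.cast_succ] at this
      have := this.symm
      rcases mul_eq_zero.1 this with h | h
      · exact absurd h hnpos
      · exact h
    set g := deriv f with hgdef
    have hg : ContDiffOn ℝ (⊤ : ℕ∞) g I := hf.deriv_of_isOpen hI (by simp)
    have hfd : ∀ w ∈ I, DifferentiableAt ℝ f w := fun w hw =>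
      (hf.contDiffAt (hI.mem_nhds hw)).differentiableAt (by simp)
    have hgd : ∀ w ∈ I, DifferentiableAt ℝ g w := fun w hw =>
      (hg.contDiffAt (hI.mem_nhds hw)).differentiableAt (by simp)
    have hgode : ∀ w ∈ I, w * deriv g w = (n : ℝ) * g w := by
      intro w hw
      have heq : (fun x => x * deriv f x) =ᶠ[nhds w] (fun x => ((n : ℝ) + 1) * f x) := by
        filter_upwards [hI.mem_nhds hw] with x hx
        have := hode x hx
        push_cast at this
        linarith
      have hdeq := heq.deriv_eq
      have h1 : deriv (fun x => x * deriv f x) w = deriv f w + w * deriv g w := by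
        rw [deriv_fun_mul differentiableAt_fun_id (hgd w hw)]
        simp [hgdef]
      have h2 : deriv (fun x => ((n : ℝ) + 1) * f x) w = ((n : ℝ) + 1) * deriv f w := by
        rw [deriv_const_mul _ (hfd w hw)]
      rw [h1, h2] at hdeq
      have : w * deriv g w = (n : ℝ) * deriv f w := by linarith
      simpa [hgdef] using this
    obtain ⟨c, hc⟩ := ih g hg hgode
    refine ⟨c / ((n : ℝ) + 1), ?_⟩
    have key : ∀ w ∈ I, f w - c / ((n : ℝ) + 1) * w ^ (n + 1) =
        f 0 - c / ((n : ℝ) + 1) * (0 : ℝ) ^ (n + 1) := by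
      apply constI
      intro w hw
      have hfw : HasDerivAt f (c * w ^ n) w := by
        have := (hfd w hw).hasDerivAt
        rwa [show deriv f w = c * w ^ n from hc w hw] at this
      have hpw : HasDerivAt (fun x : ℝ => c / ((n : ℝ) + 1) * x ^ (n + 1))
          (c / ((n : ℝ) + 1) * (((n : ℕ) + 1 : ℕ) * w ^ n)) w :=
        (hasDerivAt_pow (n + 1) w).const_mul _
      have heval : c / ((n : ℝ) + 1) * (((n : ℕ) + 1 : ℕ) * w ^ n) = c * w ^ n := by
        push_cast
        field_simp
      rw [heval] at hpw
      simpa using hfw.fun_sub hpw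
    intro w hw
    have := key w hw
    rw [f0] at this
    simp only [zero_pow (Nat.succ_ne_zero n), mul_zero, sub_zero] at this
    linarith

/-- if f is C^∞ on an open interval I containing 0, k ≥ 1, and
w·f'(w) = 2k·f(w) on I, then f(w) = c·w^{2k} on I for some constant c ∈ ℝ. -/
theorem singular_ode_smooth_solution
    (I : Set ℝ) (hI : IsOpen I) (hI' : IsPreconnected I) (h0 : (0 : ℝ) ∈ I)
    (k : ℕ) (hk : 1 ≤ k)
    (f : ℝ → ℝ) (hf : ContDiffOn ℝ (⊤ : ℕ∞) f I)
    (hode : ∀ w ∈ I, w * deriv f w = 2 * (k : ℝ) * f w) :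
    ∃ c : ℝ, ∀ w ∈ I, f w = c * w ^ (2 * k) := by
  apply singular_ode_aux I hI hI' h0 (2 * k) f hf
  intro w hw
  have := hode w hw
  push_cast
  linarith
end
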